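/- arXiv:2506.13732 — 3 statements merged into one kernel-verified Lean document; each statement's English description precedes it below -/
import Mathlib

section
/- The pushout indexing construction satisfies the pushout universal property at the level of indexing functions: given φ : [a] → 2^[b] induced by an injection [a] ↪ [b] (cofibration-type) and any ψ : [a] → 2^[c], let [d] = [c] ⊔ ([b] \ im φ), with β : [b] → 2^[d] defined by β(j) = {j} if j ∉ im φ and β(φ(i)) = ψ(i), and α : [c] → 2^[d] the singleton inclusion. Then β ∘ φ = α ∘ ψ (using composition (ψφ)(i) = ⋃_{j∈φ(i)} ψ(j)), and for any e and maps δ : [b] → 2^[e], γ : [c] → 2^[e] with δ ∘ φ = γ ∘ ψ, there exists a unique ω : [d] → 2^[e] with ω ∘ β = δ and ω ∘ α = γ. -/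
/-- Composition of set-valued functions: `(ψφ)(x) = ⋃_{y ∈ φ(x)} ψ(y)`. -/
def scomp {α β γ : Type*} [DecidableEq γ] (ψ : β → Finset γ) (φ : α → Finset β) :
    α → Finset γ :=
  fun x => (φ x).biUnion ψ

section
variable {a b c : ℕ} (u : Fin a → Fin b) (ψ : Fin a → Finset (Fin c))

/-- The indexing set `[d] = [c] ⊔ ([b] \ im φ)` of the pushout. -/
def PushIdx : Type := Fin c ⊕ {j : Fin b // ¬ ∃ i, u i = j}

instance : DecidableEq (PushIdx (c := c) u) := by
  unfold PushIdx; infer_instance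

/-- The canonical map `β : [b] → 2^[d]`, sending `j ∉ im φ` to `{j}` and `φ(i)` to `ψ(i)`. -/
noncomputable def pushβ : Fin b → Finset (PushIdx (c := c) u) := fun j =>
  if h : ∃ i, u i = j then (ψ h.choose).image Sum.inl else {Sum.inr ⟨j, h⟩}

/-- The canonical map `α : [c] → 2^[d]`, the singleton inclusion. -/
def pushα : Fin c → Finset (PushIdx (c := c) u) := fun i => {Sum.inl i}

end

/-
The pushout is `[c]` with the part of `[b]` not hit by `φ` glued on freely. A map `ω` out of it
is therefore the pair `(ω ∘ α, ω restricted to [b] \ im φ)`, which the two equations force to be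
`(γ, δ)`; conversely this pair satisfies `ω ∘ β = δ` on `im φ` precisely because
`δ ∘ φ = γ ∘ ψ`, injectivity of `u` ensuring that `β (u i)` is `ψ i` for the right `i`.
-/

theorem scomp_singleton {α β γ : Type*} [DecidableEq γ] (ω : β → Finset γ) (f : α → β) :
    scomp ω (fun x => {f x}) = ω ∘ f :=
  funext fun _ => Finset.singleton_biUnion

section Pushout

variable {a b c : ℕ} {u : Fin a → Fin b} (ψ : Fin a → Finset (Fin c))

theorem pushβ_apply_self (hu : Function.Injective u) (i : Fin a) :
    pushβ u ψ (u i) = (ψ i).image Sum.inl := by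
  have h : ∃ i', u i' = u i := ⟨i, rfl⟩
  rw [pushβ, dif_pos h, hu h.choose_spec]
  -- the sides differ only in how the `DecidableEq` instance of `PushIdx u` is presented
  rfl

theorem pushβ_of_notMem_range {j : Fin b} (hj : ¬ ∃ i, u i = j) :
    pushβ u ψ j = {Sum.inr ⟨j, hj⟩} :=
  dif_neg hj

theorem scomp_pushα_apply {e : ℕ} (ω : PushIdx (c := c) u → Finset (Fin e)) (k : Fin c) :
    scomp ω (pushα u) k = ω (Sum.inl k) :=
  Finset.singleton_biUnion

theorem scomp_pushβ_apply_self (hu : Function.Injective u) {e : ℕ}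
    (ω : PushIdx (c := c) u → Finset (Fin e)) (i : Fin a) :
    scomp ω (pushβ u ψ) (u i) = (ψ i).biUnion fun k => ω (Sum.inl k) := by
  rw [scomp, pushβ_apply_self ψ hu]
  exact Finset.image_biUnion

theorem scomp_pushβ_of_notMem_range {e : ℕ} (ω : PushIdx (c := c) u → Finset (Fin e))
    {j : Fin b} (hj : ¬ ∃ i, u i = j) :
    scomp ω (pushβ u ψ) j = ω (Sum.inr ⟨j, hj⟩) := by
  rw [scomp, pushβ_of_notMem_range ψ hj]
  exact Finset.singleton_biUnion

theorem pushβ_comp_eq_pushα_comp (hu : Function.Injective u) :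
    scomp (pushβ u ψ) (fun i => {u i}) = scomp (pushα u) ψ := by
  funext i
  rw [scomp_singleton, Function.comp_apply, pushβ_apply_self ψ hu, scomp]
  exact Finset.biUnion_singleton.symm

def pushDesc {e : ℕ} (δ : Fin b → Finset (Fin e)) (γ : Fin c → Finset (Fin e)) :
    PushIdx (c := c) u → Finset (Fin e) :=
  Sum.elim γ fun j => δ j.1

theorem scomp_pushDesc_pushα {e : ℕ} (δ : Fin b → Finset (Fin e)) (γ : Fin c → Finset (Fin e)) :
    scomp (pushDesc δ γ) (pushα u) = γ :=
  funext (scomp_pushα_apply _)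

theorem scomp_pushDesc_pushβ (hu : Function.Injective u) {e : ℕ}
    {δ : Fin b → Finset (Fin e)} {γ : Fin c → Finset (Fin e)}
    (hsq : scomp δ (fun i => {u i}) = scomp γ ψ) :
    scomp (pushDesc δ γ) (pushβ u ψ) = δ := by
  funext j
  by_cases hj : ∃ i, u i = j
  · obtain ⟨i, rfl⟩ := hj
    calc scomp (pushDesc δ γ) (pushβ u ψ) (u i) = scomp γ ψ i :=
          scomp_pushβ_apply_self ψ hu _ i
      _ = δ (u i) := by rw [← hsq, scomp_singleton, Function.comp_apply]
  · exact scomp_pushβ_of_notMem_range ψ _ hj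

theorem eq_pushDesc {e : ℕ} {ω : PushIdx (c := c) u → Finset (Fin e)}
    {δ : Fin b → Finset (Fin e)} {γ : Fin c → Finset (Fin e)}
    (hβ : scomp ω (pushβ u ψ) = δ) (hα : scomp ω (pushα u) = γ) :
    ω = pushDesc δ γ := by
  funext d
  rcases d with k | ⟨j, hj⟩
  · exact (scomp_pushα_apply ω k).symm.trans (congrFun hα k)
  · exact (scomp_pushβ_of_notMem_range ψ ω hj).symm.trans (congrFun hβ j)

end Pushout

/-- the pushout indexing construction satisfies the pushout universal
property at the level of indexing functions: for `φ` cofibration-type (induced by an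
injection `u`), the square `β ∘ φ = α ∘ ψ` commutes, and for any `δ, γ` with
`δ ∘ φ = γ ∘ ψ` there is a unique `ω` with `ω ∘ β = δ` and `ω ∘ α = γ`. -/
theorem pushout_universal_property {a b c : ℕ} (u : Fin a → Fin b)
    (hu : Function.Injective u) (ψ : Fin a → Finset (Fin c)) :
    scomp (pushβ u ψ) (fun i => {u i}) = scomp (pushα u) ψ ∧
    ∀ (e : ℕ) (δ : Fin b → Finset (Fin e)) (γ : Fin c → Finset (Fin e)),
      scomp δ (fun i => {u i}) = scomp γ ψ →
      ∃! ω : PushIdx (c := c) u → Finset (Fin e),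
        scomp ω (pushβ u ψ) = δ ∧ scomp ω (pushα u) = γ := by
  refine ⟨pushβ_comp_eq_pushα_comp ψ hu, fun e δ γ hsq => ?_⟩
  exact ⟨pushDesc δ γ, ⟨scomp_pushDesc_pushβ ψ hu hsq, scomp_pushDesc_pushα δ γ⟩,
    fun ω ⟨hβ, hα⟩ => eq_pushDesc ψ hβ hα⟩
end

section
/- In Γ(C) for a permutative category C, the concatenation A ∨ B = (A_1,…,A_a,B_1,…,B_b) is a coproduct of A and B: the canonical inclusions ([a] ↪ [a+b] and [b] ↪ [a+b] as singleton maps, with identity components) exhibit A ∨ B as a coproduct, i.e., for any object E and morphisms (δ,ℓ) : A → E, (γ,p) : B → E there is a unique morphism (ω,q) : A ∨ B → E commuting with the inclusions. -/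
open CategoryTheory

universe v u

/-- A permutative (strict symmetric monoidal) category: a category whose objects form
a monoid (the strictly associative and unital tensor product on objects), together
with a tensor product on morphisms and a symmetry (braiding). -/
structure Permutative where
  Obj : Type u
  [cat : Category.{v} Obj]
  [mon : Monoid Obj]
  tHom : ∀ {X Y Z W : Obj}, (X ⟶ Y) → (Z ⟶ W) → (X * Z ⟶ Y * W)
  tHom_id : ∀ X Z : Obj, tHom (𝟙 X) (𝟙 Z) = 𝟙 (X * Z)
  tHom_comp : ∀ {X₁ X₂ X₃ Y₁ Y₂ Y₃ : Obj} (f : X₁ ⟶ X₂) (f' : X₂ ⟶ X₃)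
    (g : Y₁ ⟶ Y₂) (g' : Y₂ ⟶ Y₃),
    tHom (f ≫ f') (g ≫ g') = tHom f g ≫ tHom f' g'
  braid : ∀ X Y : Obj, X * Y ≅ Y * X
  braid_braid : ∀ X Y : Obj, (braid X Y).hom ≫ (braid Y X).hom = 𝟙 (X * Y)

attribute [instance] Permutative.cat Permutative.mon

variable {P : Permutative}

/-- A morphism `(φ, f) : A → B` in `Γ(C)`: a set-valued function
`φ : [a] → 2^[b]` and, for each `i` with `φ(i) ≠ ∅`, a morphism
`f_i : A_i ⟶ B_{j_1} ⊗ ⋯ ⊗ B_{j_p}` where `φ(i) = {j_1 < … < j_p}`. -/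
structure GHom (P : Permutative) (A B : List P.Obj) where
  φ : Fin A.length → Finset (Fin B.length)
  f : ∀ i, (φ i).Nonempty → (A.get i ⟶ (((φ i).sort (· ≤ ·)).map B.get).prod)

/-- The identity morphism of `Γ(C)`. -/
def idG (A : List P.Obj) : GHom P A A where
  φ := fun i => {i}
  f := fun i _ => eqToHom (by simp)

/-- Composition in `Γ(C)` of a morphism whose underlying set-function is
singleton-valued (given by `σ`) with an arbitrary morphism. -/
def compSingle {A B C : List P.Obj} (σ : Fin A.length → Fin B.length)
    (u : GHom P A B) (hu : ∀ i, u.φ i = {σ i}) (v : GHom P B C) : GHom P A C where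
  φ := fun i => v.φ (σ i)
  f := fun i h =>
    u.f i (by rw [hu i]; exact ⟨σ i, Finset.mem_singleton_self _⟩) ≫
      eqToHom (by rw [hu i]; simp) ≫ v.f (σ i) h

/-- The index of `A` in the concatenation `A ++ B`. -/
def inlIdx (A B : List P.Obj) (i : Fin A.length) : Fin (A ++ B).length :=
  ⟨i.1, by rw [List.length_append]; omega⟩

/-- The index of `B` in the concatenation `A ++ B`. -/
def inrIdx (A B : List P.Obj) (j : Fin B.length) : Fin (A ++ B).length :=
  ⟨A.length + j.1, by rw [List.length_append]; omega⟩

/-- The canonical inclusion `A → A ∨ B` in `Γ(C)`. -/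
def inlG (A B : List P.Obj) : GHom P A (A ++ B) where
  φ := fun i => {inlIdx A B i}
  f := fun i _ => eqToHom (by simp [inlIdx, List.getElem_append_left])

/-- The canonical inclusion `B → A ∨ B` in `Γ(C)`. -/
def inrG (A B : List P.Obj) : GHom P B (A ++ B) where
  φ := fun j => {inrIdx A B j}
  f := fun j _ => eqToHom (by simp [inrIdx, List.getElem_append_right])

/-!
The inclusions `A → A ∨ B ← B` are singleton-valued with identity components, so restricting
a morphism `w : A ∨ B → E` along them just reads off the entries `(w.φ k, w.f k)` at the
positions `k < |A|`, respectively `k ≥ |A|`. These positions exhaust `A ∨ B`, so a morphism out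
of `A ∨ B` is the same as a pair of morphisms out of `A` and `B`: the copairing `desc u v`
takes its entries from `u` or `v` according to the position. Components of morphisms are
compared heterogeneously, since their codomains depend on `φ`.
-/

section

variable {A B E : List P.Obj}

theorem length_sub_lt_of_not_lt (k : Fin (A ++ B).length) (h : ¬ (k : ℕ) < A.length) :
    (k : ℕ) - A.length < B.length := by
  have hk : (k : ℕ) < A.length + B.length := List.length_append ▸ k.2
  omega

theorem inlIdx_or_inrIdx (k : Fin (A ++ B).length) :
    (∃ i, inlIdx A B i = k) ∨ ∃ j, inrIdx A B j = k := by
  by_cases h : (k : ℕ) < A.length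
  · exact Or.inl ⟨⟨k, h⟩, rfl⟩
  · refine Or.inr ⟨⟨k - A.length, length_sub_lt_of_not_lt k h⟩, Fin.ext ?_⟩
    simp only [inrIdx]
    omega

namespace GHom

theorem ext_heq {w₁ w₂ : GHom P A B} (hφ : ∀ i, w₁.φ i = w₂.φ i)
    (hf : ∀ i h₁ h₂, w₁.f i h₁ ≍ w₂.f i h₂) : w₁ = w₂ := by
  obtain ⟨φ₁, f₁⟩ := w₁
  obtain ⟨φ₂, f₂⟩ := w₂
  obtain rfl : φ₁ = φ₂ := funext hφ
  congr
  funext i h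
  exact eq_of_heq (hf i h h)

theorem f_heq_of_eq (w : GHom P A B) {i j : Fin A.length} (hij : i = j)
    (hi : (w.φ i).Nonempty) (hj : (w.φ j).Nonempty) : w.f i hi ≍ w.f j hj := by
  cases hij; rfl

def restrictLeft (w : GHom P (A ++ B) E) : GHom P A E :=
  compSingle (inlIdx A B) (inlG A B) (fun _ => rfl) w

def restrictRight (w : GHom P (A ++ B) E) : GHom P B E :=
  compSingle (inrIdx A B) (inrG A B) (fun _ => rfl) w

theorem restrictLeft_f_heq (w : GHom P (A ++ B) E) (i : Fin A.length)
    (h : (w.φ (inlIdx A B i)).Nonempty) : w.restrictLeft.f i h ≍ w.f (inlIdx A B i) h := by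
  dsimp only [restrictLeft, compSingle, inlG]
  exact (eqToHom_comp_heq ..).trans (eqToHom_comp_heq ..)

theorem restrictRight_f_heq (w : GHom P (A ++ B) E) (j : Fin B.length)
    (h : (w.φ (inrIdx A B j)).Nonempty) : w.restrictRight.f j h ≍ w.f (inrIdx A B j) h := by
  dsimp only [restrictRight, compSingle, inrG]
  exact (eqToHom_comp_heq ..).trans (eqToHom_comp_heq ..)

def desc (u : GHom P A E) (v : GHom P B E) : GHom P (A ++ B) E where
  φ k := if h : (k : ℕ) < A.length then u.φ ⟨k, h⟩
    else v.φ ⟨k - A.length, length_sub_lt_of_not_lt k h⟩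
  f k hk :=
    if h : (k : ℕ) < A.length then
      eqToHom (List.getElem_append_left h) ≫
        u.f ⟨k, h⟩ (by simpa [h] using hk) ≫ eqToHom (by simp [h])
    else
      eqToHom (List.getElem_append_right (Nat.le_of_not_lt h)) ≫
        v.f ⟨k - A.length, length_sub_lt_of_not_lt k h⟩ (by simpa [h] using hk) ≫
          eqToHom (by simp [h])

theorem desc_φ_inlIdx (u : GHom P A E) (v : GHom P B E) (i : Fin A.length) :
    (desc u v).φ (inlIdx A B i) = u.φ i := by
  simp [desc, inlIdx]

theorem desc_φ_inrIdx (u : GHom P A E) (v : GHom P B E) (j : Fin B.length) :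
    (desc u v).φ (inrIdx A B j) = v.φ j := by
  simp [desc, inrIdx]

theorem desc_f_inlIdx_heq (u : GHom P A E) (v : GHom P B E) (i : Fin A.length)
    (h₁ : ((desc u v).φ (inlIdx A B i)).Nonempty) (h₂ : (u.φ i).Nonempty) :
    (desc u v).f (inlIdx A B i) h₁ ≍ u.f i h₂ := by
  have hi : (inlIdx A B i : ℕ) < A.length := i.2
  simp only [desc, hi, dif_pos]
  exact (eqToHom_comp_heq ..).trans (comp_eqToHom_heq ..)

theorem desc_f_inrIdx_heq (u : GHom P A E) (v : GHom P B E) (j : Fin B.length)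
    (h₁ : ((desc u v).φ (inrIdx A B j)).Nonempty) (h₂ : (v.φ j).Nonempty) :
    (desc u v).f (inrIdx A B j) h₁ ≍ v.f j h₂ := by
  have hj : ¬ (inrIdx A B j : ℕ) < A.length := by simp [inrIdx]
  simp only [desc, hj, dif_neg, not_false_iff]
  exact (eqToHom_comp_heq ..).trans <| (comp_eqToHom_heq ..).trans <|
    v.f_heq_of_eq (Fin.ext (by simp [inrIdx])) _ _

theorem restrictLeft_desc (u : GHom P A E) (v : GHom P B E) : (desc u v).restrictLeft = u :=
  ext_heq (desc_φ_inlIdx u v) fun i h₁ h₂ =>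
    (restrictLeft_f_heq _ i h₁).trans (desc_f_inlIdx_heq u v i h₁ h₂)

theorem restrictRight_desc (u : GHom P A E) (v : GHom P B E) : (desc u v).restrictRight = v :=
  ext_heq (desc_φ_inrIdx u v) fun j h₁ h₂ =>
    (restrictRight_f_heq _ j h₁).trans (desc_f_inrIdx_heq u v j h₁ h₂)

theorem desc_restrictLeft_restrictRight (w : GHom P (A ++ B) E) :
    desc w.restrictLeft w.restrictRight = w := by
  refine ext_heq (fun k => ?_) fun k h₁ h₂ => ?_
  · rcases inlIdx_or_inrIdx k with ⟨i, rfl⟩ | ⟨j, rfl⟩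
    · exact desc_φ_inlIdx _ _ i
    · exact desc_φ_inrIdx _ _ j
  · rcases inlIdx_or_inrIdx k with ⟨i, rfl⟩ | ⟨j, rfl⟩
    · exact (desc_f_inlIdx_heq _ _ i h₁ h₂).trans (restrictLeft_f_heq w i h₂)
    · exact (desc_f_inrIdx_heq _ _ j h₁ h₂).trans (restrictRight_f_heq w j h₂)

end GHom

end

/-- in `Γ(C)` the concatenation `A ∨ B` together with the canonical
inclusions is a coproduct of `A` and `B`: for any object `E` and morphisms
`A → E`, `B → E` there is a unique morphism `A ∨ B → E` commuting with the
inclusions. -/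
theorem concatenation_is_coproduct (P : Permutative) (A B : List P.Obj)
    (E : List P.Obj) (u : GHom P A E) (v : GHom P B E) :
    ∃! w : GHom P (A ++ B) E,
      compSingle (inlIdx A B) (inlG A B) (fun _ => rfl) w = u ∧
      compSingle (inrIdx A B) (inrG A B) (fun _ => rfl) w = v := by
  refine ⟨GHom.desc u v, ⟨GHom.restrictLeft_desc u v, GHom.restrictRight_desc u v⟩, ?_⟩
  rintro w ⟨rfl, rfl⟩
  exact (GHom.desc_restrictLeft_restrictRight w).symm
end

section
/- For every cofibration (φ,f) : A ↣ B in Γ(C), there is a weak equivalence A ∨ B/A → B relative to A: the underlying set function is the partition-type map induced by the unique order-preserving-on-blocks bijection [b] ≅ [a] ⊔ (im φ)^c placing im φ first, with components the isomorphisms f_i on the A-part and identities on the (B/A)-part; this morphism is a weak equivalence and its precomposition with the cofibration A ↣ A ∨ B/A equals (φ,f). -/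
open CategoryTheory

universe v u

variable {P : Permutative}

/-- Cofibrations in `Γ(C)`: `φ` is induced by an injection and every component is an
isomorphism. -/
def IsCof {A B : List P.Obj} (u : GHom P A B) : Prop :=
  ∃ σ : Fin A.length → Fin B.length, Function.Injective σ ∧
    (∀ i, u.φ i = {σ i}) ∧ ∀ i h, IsIso (u.f i h)

/-- The complement `[b] \ im φ` of the image of an injection. -/
def imCompl {n a : ℕ} (σ : Fin a → Fin n) : Finset (Fin n) :=
  Finset.univ \ Finset.image σ Finset.univ

/-- The cofiber `B/A` of a cofibration with underlying injection `σ`: the tuple of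
entries of `B` indexed by `[b] \ im φ` (in increasing order). -/
def cofiberObj {a : ℕ} (B : List P.Obj) (σ : Fin a → Fin B.length) : List P.Obj :=
  ((imCompl σ).sort (· ≤ ·)).map B.get

/-- The explicit pushout `C ∪_A B` of `C ← A ↣ B` along a cofibration with underlying
injection `σ`: indexed by `[c] ⊔ ([b] \ im φ)` with entries from `C` and `B`. -/
def pushoutObj {a : ℕ} (C B : List P.Obj) (σ : Fin a → Fin B.length) : List P.Obj :=
  C ++ cofiberObj B σ

/-- Weak equivalences in `Γ(C)`: the values of `φ` are pairwise disjoint and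
cover `[b]`. -/
def IsWeq {A B : List P.Obj} (u : GHom P A B) : Prop :=
  (∀ i j, i ≠ j → Disjoint (u.φ i) (u.φ j)) ∧ Finset.univ.biUnion u.φ = Finset.univ

/-- The splitting map `A ∨ B/A → B` associated to a cofibration `(φ, f) : A ↣ B`:
the underlying set-function is the partition-type map induced by the bijection
`[b] ≅ [a] ⊔ (im φ)^c` placing `im φ` first; the components are the `f_i` on the
`A`-part and identities on the `B/A`-part. -/
def splitMap {A B : List P.Obj} (u : GHom P A B)
    (σ : Fin A.length → Fin B.length) (hu : ∀ i, u.φ i = {σ i}) :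
    GHom P (A ++ cofiberObj B σ) B where
  φ := fun i =>
    if h : i.1 < A.length then {σ ⟨i.1, h⟩}
    else {((imCompl σ).sort (· ≤ ·)).get ⟨i.1 - A.length, by
      have h2 := i.2
      simp only [List.length_append, cofiberObj, List.length_map] at h2
      omega⟩}
  f := fun i h =>
    if hlt : i.1 < A.length then
      eqToHom (List.getElem_append_left hlt) ≫
        u.f ⟨i.1, hlt⟩ (by rw [hu]; exact ⟨_, Finset.mem_singleton_self _⟩) ≫
        eqToHom (by
          rw [hu]; beta_reduce; split
          · rfl
          · omega)
    else
      eqToHom (by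
        beta_reduce
        split
        · omega
        · rw [List.get_eq_getElem, List.getElem_append_right (Nat.le_of_not_lt hlt)]
          simp [cofiberObj])

theorem GHom.ext_of_φ_eq {A B : List P.Obj} {u v : GHom P A B} (hφ : u.φ = v.φ)
    (hf : ∀ i h h', u.f i h = v.f i h' ≫ eqToHom (by rw [hφ])) : u = v := by
  obtain ⟨φ, fu⟩ := u
  obtain ⟨φ', fv⟩ := v
  dsimp only at hφ
  subst hφ
  congr 1
  funext i h
  simpa using hf i h h

theorem isWeq_of_bijective {A B : List P.Obj} (u : GHom P A B)
    (τ : Fin A.length → Fin B.length) (hτ : Function.Bijective τ) (hu : ∀ i, u.φ i = {τ i}) :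
    IsWeq u := by
  refine ⟨fun i j hij => ?_, Finset.eq_univ_of_forall fun j => ?_⟩
  · simpa only [hu, Finset.disjoint_singleton] using hτ.1.ne hij
  · obtain ⟨i, rfl⟩ := hτ.2 j
    exact Finset.mem_biUnion.mpr ⟨i, Finset.mem_univ i, by simp [hu]⟩

theorem apply_ne_sort_imCompl_get {n a : ℕ} (σ : Fin a → Fin n)
    (k : Fin ((imCompl σ).sort (· ≤ ·)).length) (i : Fin a) :
    σ i ≠ ((imCompl σ).sort (· ≤ ·)).get k := by
  have hk : ((imCompl σ).sort (· ≤ ·)).get k ∈ imCompl σ :=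
    (Finset.mem_sort _).mp (List.get_mem _ k)
  intro he
  simp only [imCompl, Finset.mem_sdiff, Finset.mem_univ, Finset.mem_image, true_and] at hk
  exact hk ⟨i, he⟩

/-- The bijection `[a] ⊔ (im σ)ᶜ ≅ [b]` underlying `splitMap`. -/
def splitIdx {A B : List P.Obj} (σ : Fin A.length → Fin B.length)
    (i : Fin (A ++ cofiberObj B σ).length) : Fin B.length :=
  if h : i.1 < A.length then σ ⟨i.1, h⟩
  else ((imCompl σ).sort (· ≤ ·)).get ⟨i.1 - A.length, by
    have := i.2
    simp only [List.length_append, cofiberObj, List.length_map] at this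
    omega⟩

theorem splitMap_φ {A B : List P.Obj} (u : GHom P A B)
    (σ : Fin A.length → Fin B.length) (hu : ∀ i, u.φ i = {σ i})
    (i : Fin (A ++ cofiberObj B σ).length) :
    (splitMap u σ hu).φ i = {splitIdx σ i} := by
  unfold splitMap splitIdx
  dsimp only
  split <;> rfl

theorem splitIdx_injective {A B : List P.Obj} {σ : Fin A.length → Fin B.length}
    (hσ : Function.Injective σ) : Function.Injective (splitIdx σ) := by
  intro i j hij
  unfold splitIdx at hij
  split at hij <;> split at hij
  · exact Fin.ext (Fin.mk.inj_iff.mp (hσ hij))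
  · exact absurd hij (apply_ne_sort_imCompl_get σ _ _)
  · exact absurd hij.symm (apply_ne_sort_imCompl_get σ _ _)
  · have := congrArg Fin.val (((imCompl σ).sort_nodup (· ≤ ·)).get_inj_iff.mp hij)
    simp only at this
    omega

theorem splitIdx_surjective {A B : List P.Obj} (σ : Fin A.length → Fin B.length) :
    Function.Surjective (splitIdx σ) := by
  intro j
  by_cases hj : j ∈ Finset.image σ Finset.univ
  · obtain ⟨i, -, rfl⟩ := Finset.mem_image.mp hj
    refine ⟨⟨i.1, by simp; omega⟩, ?_⟩
    simp [splitIdx]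
  · have hj' : j ∈ (imCompl σ).sort (· ≤ ·) := by simpa [imCompl] using hj
    obtain ⟨k, rfl⟩ := List.mem_iff_get.mp hj'
    have hk : k.1 < (cofiberObj B σ).length := by simpa [cofiberObj] using k.2
    refine ⟨⟨A.length + k.1, by simp; omega⟩, ?_⟩
    simp [splitIdx]

theorem compSingle_inlG_splitMap {A B : List P.Obj} (u : GHom P A B)
    (σ : Fin A.length → Fin B.length) (hu : ∀ i, u.φ i = {σ i}) :
    compSingle (inlIdx A (cofiberObj B σ)) (inlG A (cofiberObj B σ)) (fun _ => rfl)
      (splitMap u σ hu) = u := by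
  have hφ : (compSingle (inlIdx A (cofiberObj B σ)) (inlG A (cofiberObj B σ))
      (fun _ => rfl) (splitMap u σ hu)).φ = u.φ := by
    funext i
    simp [compSingle, inlIdx, splitMap, hu]
  refine GHom.ext_of_φ_eq hφ fun i h h' => ?_
  simp only [compSingle, inlG, inlIdx, splitMap, dif_pos i.2, Fin.eta]
  erw [eqToHom_trans_assoc, eqToHom_trans_assoc]
  simp

theorem weakly_split_cofibrations_general (P : Permutative) (A B : List P.Obj)
    (u : GHom P A B) (σ : Fin A.length → Fin B.length)
    (hσ : Function.Injective σ) (hu : ∀ i, u.φ i = {σ i}) :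
    IsWeq (splitMap u σ hu) ∧
    compSingle (inlIdx A (cofiberObj B σ)) (inlG A (cofiberObj B σ)) (fun _ => rfl)
      (splitMap u σ hu) = u :=
  ⟨isWeq_of_bijective _ (splitIdx σ) ⟨splitIdx_injective hσ, splitIdx_surjective σ⟩
      (splitMap_φ u σ hu),
    compSingle_inlG_splitMap u σ hu⟩

/-- for every cofibration `(φ, f) : A ↣ B` in `Γ(C)` there is a weak
equivalence `A ∨ B/A → B` relative to `A`: the splitting map is a weak equivalence
and its precomposition with the cofibration `A ↣ A ∨ B/A` equals `(φ, f)`. -/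
theorem weakly_split_cofibrations (P : Permutative) (A B : List P.Obj)
    (u : GHom P A B) (σ : Fin A.length → Fin B.length)
    (hσ : Function.Injective σ) (hu : ∀ i, u.φ i = {σ i})
    (hiso : ∀ i h, IsIso (u.f i h)) :
    IsWeq (splitMap u σ hu) ∧
    compSingle (inlIdx A (cofiberObj B σ)) (inlG A (cofiberObj B σ)) (fun _ => rfl)
      (splitMap u σ hu) = u :=
  weakly_split_cofibrations_general P A B u σ hσ hu
end
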